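/- Let Ω ⊂ ℝ³ be open containing 0, U : Ω → ℝ smooth, μ > 0, h ∈ ℝ, and suppose q_n : I → Ω are C² solutions of q̈_n = -μ q_n/|q_n|³ - 2ε_n μ q_n/|q_n|⁴ + ∇U(q_n) with energy ½|q̇_n|² - μ/|q_n| - ε_n μ/|q_n|² - U(q_n) ≡ h, where ε_n ≥ 0, ε_n → 0, and q_n → q_∞ weakly in H¹(I) (hence uniformly). Then the collision set q_∞^{-1}(0) has Lebesgue measure zero. -/

import Mathlib

theorem collision_set_measure_zero (t₁ t₂ μ h : ℝ) (ht : t₁ < t₂) (hμ : 0 < μ)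
    (Ω : Set (EuclideanSpace ℝ (Fin 3))) (hΩ : IsOpen Ω) (h0Ω : (0 : EuclideanSpace ℝ (Fin 3)) ∈ Ω)
    (U : EuclideanSpace ℝ (Fin 3) → ℝ) (hU : ContDiffOn ℝ (⊤ : ℕ∞) U Ω)
    (ε : ℕ → ℝ) (hεpos : ∀ n, 0 ≤ ε n) (hεlim : Filter.Tendsto ε Filter.atTop (nhds 0))
    (q : ℕ → ℝ → EuclideanSpace ℝ (Fin 3)) (hqC2 : ∀ n, ContDiff ℝ 2 (q n))
    (hmaps : ∀ n, ∀ t ∈ Set.Icc t₁ t₂, q n t ∈ Ω ∧ q n t ≠ 0)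
    (hode : ∀ n, ∀ t ∈ Set.Icc t₁ t₂,
      deriv (deriv (q n)) t = -(μ / ‖q n t‖ ^ 3) • q n t
        - (2 * ε n * μ / ‖q n t‖ ^ 4) • q n t + gradient U (q n t))
    (henergy : ∀ n, ∀ t ∈ Set.Icc t₁ t₂,
      (1 / 2) * ‖deriv (q n) t‖ ^ 2 - μ / ‖q n t‖ - ε n * μ / ‖q n t‖ ^ 2 - U (q n t) = h)
    (qinf : ℝ → EuclideanSpace ℝ (Fin 3))
    (hunif : TendstoUniformlyOn q qinf Filter.atTop (Set.Icc t₁ t₂))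
    (hbdd : ∃ B : ℝ, ∀ n, (∫ t in t₁..t₂, ‖deriv (q n) t‖ ^ 2) ≤ B) :
    MeasureTheory.volume {t ∈ Set.Icc t₁ t₂ | qinf t = 0} = 0 := by
  classical
  obtain ⟨B, hB⟩ := hbdd
  set S : Set ℝ := {t ∈ Set.Icc t₁ t₂ | qinf t = 0} with hSdef
  -- qinf is continuous on Icc
  have hqcont : ∀ n, Continuous (q n) := fun n => (hqC2 n).continuous
  have hqinfcont : ContinuousOn qinf (Set.Icc t₁ t₂) :=
    hunif.continuousOn (Filter.Eventually.of_forall fun n => (hqcont n).continuousOn).frequently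
  have hSmeas : MeasurableSet S := by
    have : S = Set.Icc t₁ t₂ ∩ qinf ⁻¹' {0} := by
      ext t; simp [hSdef, Set.mem_setOf_eq]
    rw [this]
    exact (hqinfcont.preimage_isClosed_of_isClosed isClosed_Icc isClosed_singleton).measurableSet
  -- derivative continuity
  have hderivcont : ∀ n, Continuous (deriv (q n)) := fun n =>
    (hqC2 n).continuous_deriv one_le_two
  -- pointwise blowup of kinetic energy on S
  have hblow : ∀ t ∈ S, Filter.Tendsto (fun n => ‖deriv (q n) t‖ ^ 2) Filter.atTop Filter.atTop := by
    intro t htS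
    obtain ⟨htI, ht0⟩ := htS
    have hqt : Filter.Tendsto (fun n => q n t) Filter.atTop (nhds 0) := by
      have := hunif.tendsto_at htI
      rwa [ht0] at this
    have hnorm : Filter.Tendsto (fun n => ‖q n t‖) Filter.atTop (nhds 0) := by
      simpa using hqt.norm
    have hnormpos : ∀ n, 0 < ‖q n t‖ := fun n => norm_pos_iff.mpr (hmaps n t htI).2
    have hnorm' : Filter.Tendsto (fun n => ‖q n t‖) Filter.atTop (nhdsWithin 0 (Set.Ioi 0)) :=
      tendsto_nhdsWithin_of_tendsto_nhds_of_eventually_within _ hnorm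
        (Filter.Eventually.of_forall fun n => hnormpos n)
    have hinv : Filter.Tendsto (fun n => μ / ‖q n t‖) Filter.atTop Filter.atTop := by
      have h1 : Filter.Tendsto (fun n => ‖q n t‖⁻¹) Filter.atTop Filter.atTop :=
        tendsto_inv_nhdsGT_zero.comp hnorm'
      have := h1.const_mul_atTop hμ
      simpa [div_eq_mul_inv] using this
    have hUcont : Filter.Tendsto (fun n => U (q n t)) Filter.atTop (nhds (U 0)) := by
      have hUc : ContinuousAt U 0 :=
        (hU.continuousOn.continuousAt (hΩ.mem_nhds h0Ω))
      exact hUc.tendsto.comp hqt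
    -- lower bound: ‖q̇ₙ t‖² ≥ 2h + 2μ/‖qₙ t‖ + 2 U(qₙ t)
    have hlb : ∀ n, 2 * h + 2 * (μ / ‖q n t‖) + 2 * U (q n t) ≤ ‖deriv (q n) t‖ ^ 2 := by
      intro n
      have he := henergy n t htI
      have hεterm : 0 ≤ ε n * μ / ‖q n t‖ ^ 2 := by
        apply div_nonneg (mul_nonneg (hεpos n) hμ.le) (by positivity)
      nlinarith [he, hεterm]
    have hlow : Filter.Tendsto (fun n => 2 * h + 2 * (μ / ‖q n t‖) + 2 * U (q n t))
        Filter.atTop Filter.atTop := by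
      have h2 : Filter.Tendsto (fun n => 2 * (μ / ‖q n t‖)) Filter.atTop Filter.atTop :=
        hinv.const_mul_atTop two_pos
      have h3 : Filter.Tendsto (fun n => 2 * h + 2 * (μ / ‖q n t‖)) Filter.atTop Filter.atTop :=
        Filter.tendsto_atTop_add_const_left _ _ h2
      exact Filter.Tendsto.atTop_add h3 (hUcont.const_mul 2)
    exact Filter.tendsto_atTop_mono hlb hlow
  -- define the ENNReal integrands
  set F : ℕ → ℝ → ENNReal := fun n t => ENNReal.ofReal (‖deriv (q n) t‖ ^ 2) with hFdef
  have hFmeas : ∀ n, Measurable (F n) := fun n =>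
    (ENNReal.measurable_ofReal.comp ((hderivcont n).norm.pow 2).measurable)
  -- each lintegral over S is bounded by ofReal B
  have hFbound : ∀ n, (∫⁻ t in S, F n t) ≤ ENNReal.ofReal B := by
    intro n
    have hsub : S ⊆ Set.Icc t₁ t₂ := fun t htS => htS.1
    have h1 : (∫⁻ t in S, F n t) ≤ ∫⁻ t in Set.Icc t₁ t₂, F n t :=
      MeasureTheory.lintegral_mono_set hsub
    have hint : MeasureTheory.IntegrableOn (fun t => ‖deriv (q n) t‖ ^ 2) (Set.Icc t₁ t₂) :=
      (((hderivcont n).norm.pow 2).continuousOn).integrableOn_compact isCompact_Icc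
    have h2 : (∫⁻ t in Set.Icc t₁ t₂, F n t)
        = ENNReal.ofReal (∫ t in Set.Icc t₁ t₂, ‖deriv (q n) t‖ ^ 2) := by
      rw [MeasureTheory.ofReal_integral_eq_lintegral_ofReal hint
        (Filter.Eventually.of_forall fun t => by positivity)]
    have h3 : (∫ t in Set.Icc t₁ t₂, ‖deriv (q n) t‖ ^ 2) ≤ B := by
      have := hB n
      rwa [intervalIntegral.integral_of_le ht.le,
        ← MeasureTheory.integral_Icc_eq_integral_Ioc] at this
    calc (∫⁻ t in S, F n t) ≤ ∫⁻ t in Set.Icc t₁ t₂, F n t := h1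
      _ = ENNReal.ofReal (∫ t in Set.Icc t₁ t₂, ‖deriv (q n) t‖ ^ 2) := h2
      _ ≤ ENNReal.ofReal B := ENNReal.ofReal_le_ofReal h3
  -- Fatou
  have hFatou : (∫⁻ t in S, Filter.liminf (fun n => F n t) Filter.atTop)
      ≤ Filter.liminf (fun n => ∫⁻ t in S, F n t) Filter.atTop :=
    MeasureTheory.lintegral_liminf_le hFmeas
  have hliminf_top : ∀ t ∈ S, Filter.liminf (fun n => F n t) Filter.atTop = ⊤ := by
    intro t htS
    have : Filter.Tendsto (fun n => F n t) Filter.atTop (nhds ⊤) := by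
      have := hblow t htS
      exact ENNReal.tendsto_ofReal_atTop.comp this
    exact this.liminf_eq
  have hleft : (∫⁻ t in S, Filter.liminf (fun n => F n t) Filter.atTop)
      = ⊤ * MeasureTheory.volume S := by
    rw [MeasureTheory.setLIntegral_congr_fun hSmeas
      (fun t htS => hliminf_top t htS)]
    simp [MeasureTheory.setLIntegral_const]
  have hright : Filter.liminf (fun n => ∫⁻ t in S, F n t) Filter.atTop ≤ ENNReal.ofReal B := by
    calc Filter.liminf (fun n => ∫⁻ t in S, F n t) Filter.atTop
        ≤ Filter.liminf (fun _ : ℕ => ENNReal.ofReal B) Filter.atTop :=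
          Filter.liminf_le_liminf (Filter.Eventually.of_forall hFbound)
      _ = ENNReal.ofReal B := Filter.liminf_const _
  by_contra hvol
  have hSpos : MeasureTheory.volume S ≠ 0 := hvol
  have : (⊤ : ENNReal) * MeasureTheory.volume S = ⊤ := ENNReal.top_mul hSpos
  rw [hleft, this] at hFatou
  have : (⊤ : ENNReal) ≤ ENNReal.ofReal B := le_trans hFatou hright
  exact (ENNReal.ofReal_ne_top) (top_le_iff.mp this)
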